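/- arXiv:2410.20303 — 2 statements merged into one kernel-verified Lean document; each statement's English description precedes it below -/
import Mathlib

section
/- Under Assumption 1: (i) for each fixed μ ∈ [0,1), if 0 ≤ z₁ < z₂ ≤ 1 and h(z₂, μ) ≤ 0, then g(z₁, μ) < g(z₂, μ); (ii) for each fixed z ∈ [0,1), if 0 ≤ μ₁ < μ₂ < 1 and h(z, μ₂) ≤ 0, then g(z, μ₁) < g(z, μ₂). That is, g is strictly increasing in each argument on the region where h is nonpositive. -/
/-- Effective infection rate β_eff(z_S, z_I, μ_S). -/
noncomputable def betaEff (a bP bU zS zI m : ℝ) : ℝ :=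
  (bP + (bU - bP) * zI) * (a + (1 - a) * (zS * m + zI * (1 - m)))

/-- Endemic infection level y_EE(z_S, z_I, μ_S). -/
noncomputable def yEE (a gam bP bU zS zI m : ℝ) : ℝ :=
  1 - gam / betaEff a bP bU zS zI m

/-- The function h(z_I, μ_S). -/
noncomputable def hFun (a gam bP bU L CP zI m : ℝ) : ℝ :=
  (1 - a) * L * (bP + (bU - bP) * zI) * yEE a gam bP bU 1 zI m - CP

/-- The function g(z_I, μ_S). -/
noncomputable def gFun (a gam bP bU L CP CU zI m : ℝ) : ℝ :=
  yEE a gam bP bU 1 zI m * (CU - CP)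
    - (1 - m) * (1 - yEE a gam bP bU 1 zI m) * (-(hFun a gam bP bU L CP zI m))

/-- Expected-utility difference ΔU[S̄]. -/
noncomputable def dUS (a bP bU L CP y zI : ℝ) : ℝ :=
  (1 - a) * L * (bP + (bU - bP) * zI) * y - CP

/-- Expected-utility difference ΔU[Ī]. -/
noncomputable def dUI (a bP bU L CP CU m y zI : ℝ) : ℝ :=
  ((1 - m) * (1 - y) / (y + (1 - m) * (1 - y))) *
    ((1 - a) * L * (bP + (bU - bP) * zI) * y - CU) + CU - CP

/-- Stationary Nash equilibrium for signal μ_S = m. -/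
def IsSNE (a gam bP bU L CP CU m y zS zI : ℝ) : Prop :=
  y ∈ Set.Ioo (0:ℝ) 1 ∧ zS ∈ Set.Icc (0:ℝ) 1 ∧ zI ∈ Set.Icc (0:ℝ) 1 ∧
  gam < betaEff a bP bU zS zI m ∧
  y = yEE a gam bP bU zS zI m ∧
  (0 < dUS a bP bU L CP y zI → zS = 0) ∧
  (dUS a bP bU L CP y zI < 0 → zS = 1) ∧
  (0 < dUI a bP bU L CP CU m y zI → zI = 0) ∧
  (dUI a bP bU L CP CU m y zI < 0 → zI = 1)

/-- Characterization of μ_S^max. -/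
def IsMuMax (a gam bP bU L CP CU mmax : ℝ) : Prop :=
  (0 ≤ gFun a gam bP bU L CP CU 0 0 ∧ mmax = 0) ∨
  (gFun a gam bP bU L CP CU 0 0 < 0 ∧ mmax ∈ Set.Ioo (0:ℝ) 1 ∧
    gFun a gam bP bU L CP CU 0 mmax = 0)

/-- The threshold μ_S^min. -/
noncomputable def muMin (a gam bU L CP CU : ℝ) : ℝ :=
  1 - (bU - gam) * (CU - CP) / (gam * (CP - (1 - a) * L * (bU - gam)))

/-!
Write `β = B · A` with infectivity `B = β_P + (β_U - β_P) z` and exposure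
`A = α + (1 - α)(μ + z(1 - μ))`, both nondecreasing in `z` and `μ`. Since `1 - y_EE = γ / β`,
`g = y_EE (C_U - C_P) + (1 - μ)(γ / β) h` and `h = (1 - α) L (B - γ / A) - C_P`.
Raising `z` or `μ` raises `y_EE` strictly and `h` weakly, and lowers the nonnegative weight
`(1 - μ) γ / β`; as long as `h ≤ 0`, each of these moves increases `g`.
-/

noncomputable section

def infectivity (bP bU z : ℝ) : ℝ := bP + (bU - bP) * z

def exposure (a z m : ℝ) : ℝ := a + (1 - a) * (m + z * (1 - m))

variable {a gam bP bU L CP CU : ℝ}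

lemma betaEff_one (z m : ℝ) :
    betaEff a bP bU 1 z m = infectivity bP bU z * exposure a z m := by
  rw [betaEff, infectivity, exposure, one_mul]

lemma infectivity_pos {z : ℝ} (hbP : 0 < bP) (hbPU : bP ≤ bU) (hz : 0 ≤ z) :
    0 < infectivity bP bU z := by
  unfold infectivity
  nlinarith

lemma infectivity_lt_infectivity {z₁ z₂ : ℝ} (hbPU : bP < bU) (hz : z₁ < z₂) :
    infectivity bP bU z₁ < infectivity bP bU z₂ := by
  unfold infectivity
  nlinarith

lemma exposure_eq (z m : ℝ) : exposure a z m = 1 - (1 - a) * ((1 - m) * (1 - z)) := by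
  unfold exposure
  ring

lemma exposure_pos {z m : ℝ} (ha : 0 < a) (ha1 : a ≤ 1) (hz : 0 ≤ z) (hm : 0 ≤ m)
    (hm1 : m ≤ 1) : 0 < exposure a z m := by
  unfold exposure
  have : 0 ≤ m + z * (1 - m) := by nlinarith
  nlinarith

lemma exposure_le_exposure {z₁ z₂ m₁ m₂ : ℝ} (ha1 : a ≤ 1) (hz : z₁ ≤ z₂) (hz2 : z₂ ≤ 1)
    (hm : m₁ ≤ m₂) (hm2 : m₂ ≤ 1) : exposure a z₁ m₁ ≤ exposure a z₂ m₂ := by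
  rw [exposure_eq, exposure_eq]
  have : (1 - m₂) * (1 - z₂) ≤ (1 - m₁) * (1 - z₁) := by
    gcongr
    all_goals linarith
  have : 0 ≤ 1 - a := by linarith
  gcongr

lemma exposure_lt_exposure_of_lt_right {z m₁ m₂ : ℝ} (ha1 : a < 1) (hz1 : z < 1)
    (hm : m₁ < m₂) : exposure a z m₁ < exposure a z m₂ := by
  rw [exposure_eq, exposure_eq]
  have : 0 < 1 - a := by linarith
  have : 0 < 1 - z := by linarith
  gcongr

lemma yEE_lt_yEE {zS₁ z₁ m₁ zS₂ z₂ m₂ : ℝ} (hgam : 0 < gam)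
    (hβ₁ : 0 < betaEff a bP bU zS₁ z₁ m₁)
    (hβ : betaEff a bP bU zS₁ z₁ m₁ < betaEff a bP bU zS₂ z₂ m₂) :
    yEE a gam bP bU zS₁ z₁ m₁ < yEE a gam bP bU zS₂ z₂ m₂ := by
  unfold yEE
  have := div_lt_div_of_pos_left hgam hβ₁ hβ
  linarith

lemma one_sub_yEE (zS z m : ℝ) :
    1 - yEE a gam bP bU zS z m = gam / betaEff a bP bU zS z m := by
  rw [yEE, sub_sub_cancel]

lemma hFun_eq {z m : ℝ} (hB : infectivity bP bU z ≠ 0) (hA : exposure a z m ≠ 0) :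
    hFun a gam bP bU L CP z m =
      (1 - a) * L * (infectivity bP bU z - gam / exposure a z m) - CP := by
  rw [hFun, yEE, betaEff_one, ← infectivity]
  field_simp

lemma gFun_eq (z m : ℝ) :
    gFun a gam bP bU L CP CU z m =
      yEE a gam bP bU 1 z m * (CU - CP)
        + (1 - m) * (1 - yEE a gam bP bU 1 z m) * hFun a gam bP bU L CP z m := by
  rw [gFun]
  ring

section Comparison

variable {z₁ z₂ m₁ m₂ : ℝ} (hgam : 0 < gam) (ha1 : a ≤ 1)
  (hB₁ : 0 < infectivity bP bU z₁) (hB : infectivity bP bU z₁ ≤ infectivity bP bU z₂)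
  (hA₁ : 0 < exposure a z₁ m₁) (hA : exposure a z₁ m₁ ≤ exposure a z₂ m₂)
include hgam ha1 hB₁ hB hA₁ hA

lemma hFun_le_hFun (hL : 0 ≤ L) :
    hFun a gam bP bU L CP z₁ m₁ ≤ hFun a gam bP bU L CP z₂ m₂ := by
  have hB₂ : 0 < infectivity bP bU z₂ := hB₁.trans_le hB
  have hA₂ : 0 < exposure a z₂ m₂ := hA₁.trans_le hA
  rw [hFun_eq hB₁.ne' hA₁.ne', hFun_eq hB₂.ne' hA₂.ne']
  have : 0 ≤ 1 - a := by linarith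
  gcongr

lemma gFun_lt_gFun (hL : 0 ≤ L) (hC : CP < CU) (hm : m₁ ≤ m₂) (hm2 : m₂ ≤ 1)
    (hβ : betaEff a bP bU 1 z₁ m₁ < betaEff a bP bU 1 z₂ m₂)
    (hh : hFun a gam bP bU L CP z₂ m₂ ≤ 0) :
    gFun a gam bP bU L CP CU z₁ m₁ < gFun a gam bP bU L CP CU z₂ m₂ := by
  have hβ₁ : 0 < betaEff a bP bU 1 z₁ m₁ := betaEff_one z₁ m₁ ▸ mul_pos hB₁ hA₁
  have hβ₂ : 0 < betaEff a bP bU 1 z₂ m₂ := hβ₁.trans hβ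
  set y₁ := yEE a gam bP bU 1 z₁ m₁
  set y₂ := yEE a gam bP bU 1 z₂ m₂
  set h₁ := hFun a gam bP bU L CP z₁ m₁
  set h₂ := hFun a gam bP bU L CP z₂ m₂
  have hy : y₁ < y₂ := yEE_lt_yEE hgam hβ₁ hβ
  have hh₁ : h₁ ≤ h₂ := hFun_le_hFun hgam ha1 hB₁ hB hA₁ hA hL
  have hw₂ : 0 ≤ (1 - m₂) * (1 - y₂) := by
    rw [one_sub_yEE]
    have : 0 ≤ 1 - m₂ := by linarith
    positivity
  have hw : (1 - m₂) * (1 - y₂) ≤ (1 - m₁) * (1 - y₁) := by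
    rw [one_sub_yEE, one_sub_yEE]
    have : 0 ≤ 1 - m₂ := by linarith
    gcongr
    linarith
  calc gFun a gam bP bU L CP CU z₁ m₁
      = y₁ * (CU - CP) + (1 - m₁) * (1 - y₁) * h₁ := gFun_eq z₁ m₁
    _ ≤ y₁ * (CU - CP) + (1 - m₂) * (1 - y₂) * h₁ := by
        gcongr y₁ * (CU - CP) + ?_
        exact mul_le_mul_of_nonpos_right hw (hh₁.trans hh)
    _ ≤ y₁ * (CU - CP) + (1 - m₂) * (1 - y₂) * h₂ := by gcongr
    _ < y₂ * (CU - CP) + (1 - m₂) * (1 - y₂) * h₂ := by gcongr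
    _ = gFun a gam bP bU L CP CU z₂ m₂ := (gFun_eq z₂ m₂).symm

end Comparison

end

theorem stmt13_general
    (a gam bP bU L CP CU : ℝ)
    (ha : a ∈ Set.Ioo (0:ℝ) 1) (hgam : gam ∈ Set.Ioo (0:ℝ) 1)
    (hbP : 0 < bP) (hbPU : bP < bU)
    (hL : 0 < L) (hCPU : CP < CU) :
    (∀ m ∈ Set.Ico (0:ℝ) 1, ∀ z₁ z₂ : ℝ,
      0 ≤ z₁ → z₁ < z₂ → z₂ ≤ 1 → hFun a gam bP bU L CP z₂ m ≤ 0 →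
        gFun a gam bP bU L CP CU z₁ m < gFun a gam bP bU L CP CU z₂ m) ∧
    (∀ z ∈ Set.Ico (0:ℝ) 1, ∀ m₁ m₂ : ℝ,
      0 ≤ m₁ → m₁ < m₂ → m₂ < 1 → hFun a gam bP bU L CP z m₂ ≤ 0 →
        gFun a gam bP bU L CP CU z m₁ < gFun a gam bP bU L CP CU z m₂) := by
  obtain ⟨ha0, ha1⟩ := ha
  constructor
  · rintro m ⟨hm0, hm1⟩ z₁ z₂ hz₁ hz hz₂ hh
    have hB₁ := infectivity_pos hbP hbPU.le hz₁
    have hB := infectivity_lt_infectivity hbPU hz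
    have hA₁ := exposure_pos ha0 ha1.le hz₁ hm0 hm1.le
    have hA := exposure_le_exposure ha1.le hz.le hz₂ le_rfl hm1.le
    refine gFun_lt_gFun hgam.1 ha1.le hB₁ hB.le hA₁ hA hL.le hCPU le_rfl hm1.le ?_ hh
    rw [betaEff_one, betaEff_one]
    exact mul_lt_mul hB hA hA₁ (hB₁.trans hB).le
  · rintro z ⟨hz0, hz1⟩ m₁ m₂ hm₁ hm hm₂ hh
    have hB := infectivity_pos hbP hbPU.le hz0
    have hA₁ := exposure_pos ha0 ha1.le hz0 hm₁ (hm.trans hm₂).le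
    have hA := exposure_lt_exposure_of_lt_right ha1 hz1 hm
    refine gFun_lt_gFun hgam.1 ha1.le hB le_rfl hA₁ hA.le hL.le hCPU hm.le hm₂.le ?_ hh
    rw [betaEff_one, betaEff_one]
    exact mul_lt_mul_of_pos_left hA hB

theorem stmt13
    (a gam bP bU L CP CU : ℝ)
    (ha : a ∈ Set.Ioo (0:ℝ) 1) (hgam : gam ∈ Set.Ioo (0:ℝ) 1)
    (hbP : 0 < bP) (hbPU : bP < bU) (hbU1 : bU < 1)
    (hL : 0 < L) (hCP : 0 < CP) (hCPU : CP < CU)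
    (hA1 : gam < a * bP) :
    (∀ m ∈ Set.Ico (0:ℝ) 1, ∀ z₁ z₂ : ℝ,
      0 ≤ z₁ → z₁ < z₂ → z₂ ≤ 1 → hFun a gam bP bU L CP z₂ m ≤ 0 →
        gFun a gam bP bU L CP CU z₁ m < gFun a gam bP bU L CP CU z₂ m) ∧
    (∀ z ∈ Set.Ico (0:ℝ) 1, ∀ m₁ m₂ : ℝ,
      0 ≤ m₁ → m₁ < m₂ → m₂ < 1 → hFun a gam bP bU L CP z m₂ ≤ 0 →
        gFun a gam bP bU L CP CU z m₁ < gFun a gam bP bU L CP CU z m₂) :=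
  stmt13_general a gam bP bU L CP CU ha hgam hbP hbPU hL hCPU
end

section
/- (Theorem 2) Suppose Assumptions 1 and 2 hold. Then the static signal μ_S = μ_S^max minimizes the infected proportion at the stationary Nash equilibrium: the triple (y_EE(1, 0, μ_S^max), 1, 0) is a stationary Nash equilibrium for signal μ_S^max, and for every μ_S ∈ [0,1] and every stationary Nash equilibrium (y*, z_S*, z_I*) for signal μ_S, one has y* ≥ y_EE(1, 0, μ_S^max). -/
/-!
By Assumption 2, `C_P` exceeds a susceptible agent's expected loss from infection at every
endemic level, so every SNE has `z_S = 1`, and its infection level `1 - γ / c` is increasing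
in its effective rate `c`. For a fixed rate `c ≤ β_P` and level `y`, among the pairs
`(z_I, μ_S)` producing `c` the quantity `(y + (1 - μ_S)(1 - y)) ΔU_I` is largest at `z_I = 0`.
Hence an SNE of rate `c < β_P` gives `g(0, μ') ≥ 0` for the static signal `μ'` of rate `c`;
as `g(0, ·)` is strictly increasing, `μ' ≥ μ_S^max`, i.e. `c ≥ β_eff(1, 0, μ_S^max)`.
-/

open Set

/-- `ΔU_I` with its positive denominator `y + (1 - μ_S)(1 - y)` cleared; `B` stands for the
transmission rate `β_P + (β_U - β_P) z_I`. -/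
noncomputable def infectedGap (a L CP CU m y B : ℝ) : ℝ :=
  y * (CU - CP) - (1 - m) * (1 - y) * (CP - (1 - a) * L * B * y)

/-- For fixed `c`, the map `B ↦ (B - c)(C - kB) / (B(u - B))` is nondecreasing on `[p, u)`. -/
lemma cross_mul_le_cross_mul {u p B c k C : ℝ} (hc : 0 ≤ c) (hcp : c ≤ p) (hpB : p ≤ B)
    (hBu : B ≤ u) (hk : 0 ≤ k) (hC : k * u < C) :
    (u - B) * B * (p - c) * (C - k * p) ≤ (u - p) * p * (B - c) * (C - k * B) := by
  -- the difference is `(B - p) ℓ(B)` with `ℓ` affine and nonnegative at both ends of `[p, u]`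
  set A := (p - c) * (C - k * p) - (u - p) * p * k
  have hpu : p ≤ u := hpB.trans hBu
  have hCp : 0 ≤ C - k * p := by nlinarith [mul_le_mul_of_nonneg_left hpu hk]
  have hℓp : 0 ≤ A * p + (u - p) * c * C := by
    have e : A * p + (u - p) * c * C
        = p * (p - c) * (C - k * u) + (u - p) * c * (C - k * p) := by ring
    rw [e]
    exact add_nonneg (mul_nonneg (mul_nonneg (hc.trans hcp) (by linarith)) (by linarith))
      (mul_nonneg (mul_nonneg (by linarith) hc) hCp)
  have hℓu : 0 ≤ A * u + (u - p) * c * C := by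
    have e : A * u + (u - p) * c * C = p * (u - c) * (C - k * u) := by ring
    rw [e]
    exact mul_nonneg (mul_nonneg (hc.trans hcp) (by linarith)) (by linarith)
  have hℓB : 0 ≤ A * B + (u - p) * c * C := by
    rcases le_or_gt 0 A with h | h
    · nlinarith [mul_le_mul_of_nonneg_left hpB h]
    · nlinarith [mul_le_mul_of_nonpos_left hBu h.le]
  have e : (u - p) * p * (B - c) * (C - k * B) - (u - B) * B * (p - c) * (C - k * p)
      = (B - p) * (A * B + (u - p) * c * C) := by ring
  linarith [mul_nonneg (sub_nonneg.2 hpB) hℓB]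

section Equilibria

variable {a gam bP bU L CP CU zS zI m y : ℝ}

lemma dUI_mul_eq_infectedGap (hD : y + (1 - m) * (1 - y) ≠ 0) :
    dUI a bP bU L CP CU m y zI * (y + (1 - m) * (1 - y)) =
      infectedGap a L CP CU m y (bP + (bU - bP) * zI) := by
  unfold dUI infectedGap
  field_simp
  ring

lemma dUI_nonneg_iff (hy : 0 < y) (hy1 : y ≤ 1) (hm : m ≤ 1) :
    0 ≤ dUI a bP bU L CP CU m y zI ↔ 0 ≤ infectedGap a L CP CU m y (bP + (bU - bP) * zI) := by
  have hD : 0 < y + (1 - m) * (1 - y) := by nlinarith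
  rw [← dUI_mul_eq_infectedGap hD.ne', mul_nonneg_iff_of_pos_right hD]

lemma gFun_eq_infectedGap :
    gFun a gam bP bU L CP CU zI m =
      infectedGap a L CP CU m (yEE a gam bP bU 1 zI m) (bP + (bU - bP) * zI) := by
  unfold gFun hFun infectedGap
  ring

lemma betaEff_one_zero : betaEff a bP bU 1 0 m = bP * (a + (1 - a) * m) := by
  unfold betaEff
  ring

lemma transmission_mem_Icc (hbPU : bP ≤ bU) (hzI : zI ∈ Icc 0 1) :
    bP + (bU - bP) * zI ∈ Icc bP bU := by
  constructor <;> nlinarith [hzI.1, hzI.2]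

lemma contact_mem_Icc (ha : a ≤ 1) (hzS : zS ∈ Icc 0 1) (hzI : zI ∈ Icc 0 1)
    (hm : m ∈ Icc 0 1) :
    a + (1 - a) * (zS * m + zI * (1 - m)) ∈ Icc a 1 := by
  have ht0 : 0 ≤ zS * m + zI * (1 - m) :=
    add_nonneg (mul_nonneg hzS.1 hm.1) (mul_nonneg hzI.1 (by linarith [hm.2]))
  have ht1 : zS * m + zI * (1 - m) ≤ 1 := by
    nlinarith [mul_le_mul_of_nonneg_right hzS.2 hm.1,
      mul_le_mul_of_nonneg_right hzI.2 (by linarith [hm.2] : (0 : ℝ) ≤ 1 - m)]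
  constructor <;> nlinarith

lemma betaEff_le_transmission (ha : a ≤ 1) (hbP : 0 ≤ bP) (hbPU : bP ≤ bU)
    (hzS : zS ∈ Icc 0 1) (hzI : zI ∈ Icc 0 1) (hm : m ∈ Icc 0 1) :
    betaEff a bP bU zS zI m ≤ bP + (bU - bP) * zI :=
  mul_le_of_le_one_right (hbP.trans (transmission_mem_Icc hbPU hzI).1)
    (contact_mem_Icc ha hzS hzI hm).2

lemma yEE_mem_Ioo (hgam : 0 < gam) (hβ : gam < betaEff a bP bU zS zI m) :
    yEE a gam bP bU zS zI m ∈ Ioo 0 1 := by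
  have hβ0 := hgam.trans hβ
  constructor
  · unfold yEE
    linarith [(div_lt_one hβ0).2 hβ]
  · unfold yEE
    linarith [div_pos hgam hβ0]

lemma yEE_le_yEE {zS' zI' m' : ℝ} (hgam : 0 ≤ gam) (hβ : 0 < betaEff a bP bU zS zI m)
    (h : betaEff a bP bU zS zI m ≤ betaEff a bP bU zS' zI' m') :
    yEE a gam bP bU zS zI m ≤ yEE a gam bP bU zS' zI' m' := by
  unfold yEE
  gcongr

lemma yEE_lt_yEE_s18 {zS' zI' m' : ℝ} (hgam : 0 < gam) (hβ : 0 < betaEff a bP bU zS zI m)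
    (h : betaEff a bP bU zS zI m < betaEff a bP bU zS' zI' m') :
    yEE a gam bP bU zS zI m < yEE a gam bP bU zS' zI' m' := by
  unfold yEE
  gcongr

lemma yEE_mul_le {X : ℝ} (hgam : 0 ≤ gam) (hβ : 0 < betaEff a bP bU zS zI m)
    (hX : betaEff a bP bU zS zI m ≤ X) :
    yEE a gam bP bU zS zI m * X ≤ X - gam := by
  have h : gam ≤ gam * X / betaEff a bP bU zS zI m := by
    rw [le_div_iff₀ hβ]
    exact mul_le_mul_of_nonneg_left hX hgam
  have e : yEE a gam bP bU zS zI m * X = X - gam * X / betaEff a bP bU zS zI m := by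
    unfold yEE
    ring
  linarith

lemma infectionLoss_lt_cost {X : ℝ} (haL : 0 ≤ (1 - a) * L)
    (hA2 : (1 - a) * L * (bU - gam) < CP) (hgam : 0 ≤ gam)
    (hβ : 0 < betaEff a bP bU zS zI m) (hβX : betaEff a bP bU zS zI m ≤ X) (hXU : X ≤ bU) :
    (1 - a) * L * X * yEE a gam bP bU zS zI m < CP :=
  calc (1 - a) * L * X * yEE a gam bP bU zS zI m
      = (1 - a) * L * (yEE a gam bP bU zS zI m * X) := by ring
    _ ≤ (1 - a) * L * (bU - gam) := by
      gcongr
      linarith [yEE_mul_le hgam hβ hβX]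
    _ < CP := hA2

lemma dUS_yEE_neg (ha : a ≤ 1) (hbP : 0 ≤ bP) (hbPU : bP ≤ bU) (haL : 0 ≤ (1 - a) * L)
    (hA2 : (1 - a) * L * (bU - gam) < CP) (hgam : 0 ≤ gam)
    (hzS : zS ∈ Icc 0 1) (hzI : zI ∈ Icc 0 1) (hm : m ∈ Icc 0 1)
    (hβ : 0 < betaEff a bP bU zS zI m) :
    dUS a bP bU L CP (yEE a gam bP bU zS zI m) zI < 0 := by
  unfold dUS
  linarith [infectionLoss_lt_cost haL hA2 hgam hβ
    (betaEff_le_transmission ha hbP hbPU hzS hzI hm) (transmission_mem_Icc hbPU hzI).2]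

lemma gFun_zero_strictMonoOn (ha : a < 1) (hbP : 0 < bP) (hbPU : bP ≤ bU)
    (haL : 0 ≤ (1 - a) * L) (hgam : 0 < gam) (hCPU : CP < CU)
    (hA2 : (1 - a) * L * (bU - gam) < CP) :
    StrictMonoOn (gFun a gam bP bU L CP CU 0) {m | m ≤ 1 ∧ gam < betaEff a bP bU 1 0 m} := by
  rintro m₁ ⟨-, hγ₁⟩ m₂ ⟨hm₂, hγ₂⟩ hlt
  have hβ : betaEff a bP bU 1 0 m₁ < betaEff a bP bU 1 0 m₂ := by
    simp only [betaEff_one_zero]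
    gcongr
  have hβ₂ : betaEff a bP bU 1 0 m₂ ≤ bP := by
    rw [betaEff_one_zero]
    exact mul_le_of_le_one_right hbP.le
      (by nlinarith [mul_nonneg (sub_nonneg.2 ha.le) (sub_nonneg.2 hm₂)])
  have hy : yEE a gam bP bU 1 0 m₁ < yEE a gam bP bU 1 0 m₂ :=
    yEE_lt_yEE_s18 hgam (hgam.trans hγ₁) hβ
  have hy₂ := (yEE_mem_Ioo hgam hγ₂).2
  have hloss := infectionLoss_lt_cost haL hA2 hgam.le (hgam.trans hγ₂) hβ₂ hbPU
  simp only [gFun_eq_infectedGap, infectedGap, mul_zero, add_zero]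
  have hcost : (1 - m₂) * (1 - yEE a gam bP bU 1 0 m₂) *
        (CP - (1 - a) * L * bP * yEE a gam bP bU 1 0 m₂)
      ≤ (1 - m₁) * (1 - yEE a gam bP bU 1 0 m₁) *
        (CP - (1 - a) * L * bP * yEE a gam bP bU 1 0 m₁) := by
    gcongr ?_ * ?_ * (CP - ?_)
    · exact mul_nonneg (by linarith) (by linarith)
    · linarith
    · linarith
    · linarith
    · exact mul_le_mul_of_nonneg_left hy.le (mul_nonneg haL hbP.le)
  linarith [mul_lt_mul_of_pos_right hy (sub_pos.2 hCPU)]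

lemma infectedGap_le_static {m' : ℝ} (ha : a < 1) (hbP : 0 < bP) (hbPU : bP < bU)
    (haL : 0 ≤ (1 - a) * L) (hzI : zI ∈ Ico 0 1) (hy : y ∈ Icc 0 1)
    (hrate : betaEff a bP bU 1 0 m' = betaEff a bP bU 1 zI m)
    (hc : 0 ≤ betaEff a bP bU 1 zI m) (hcP : betaEff a bP bU 1 zI m ≤ bP)
    (hkU : (1 - a) * L * y * bU < CP) :
    infectedGap a L CP CU m y (bP + (bU - bP) * zI) ≤ infectedGap a L CP CU m' y bP := by
  have hB := transmission_mem_Icc hbPU.le (Ico_subset_Icc_self hzI)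
  have hkey := cross_mul_le_cross_mul hc hcP hB.1 hB.2 (mul_nonneg haL hy.1) hkU
  have hstatic : bP - betaEff a bP bU 1 zI m = (1 - a) * bP * (1 - m') := by
    rw [← hrate, betaEff_one_zero]
    ring
  have hdynamic : bP + (bU - bP) * zI - betaEff a bP bU 1 zI m
      = (1 - a) * (1 - m) * (1 - zI) * (bP + (bU - bP) * zI) := by
    unfold betaEff
    ring
  have hK : 0 < (bU - bP) * bP * (1 - a) * (1 - zI) * (bP + (bU - bP) * zI) :=
    mul_pos (mul_pos (mul_pos (mul_pos (by linarith) hbP) (by linarith)) (by linarith [hzI.2]))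
      (hbP.trans_le hB.1)
  have hcost : (1 - m') * (CP - (1 - a) * L * y * bP)
      ≤ (1 - m) * (CP - (1 - a) * L * y * (bP + (bU - bP) * zI)) := by
    refine le_of_mul_le_mul_left ?_ hK
    calc _ = (bU - (bP + (bU - bP) * zI)) * (bP + (bU - bP) * zI)
            * (bP - betaEff a bP bU 1 zI m) * (CP - (1 - a) * L * y * bP) := by
          rw [hstatic]
          ring
      _ ≤ _ := hkey
      _ = _ := by
          rw [hdynamic]
          ring
  unfold infectedGap
  linarith [mul_le_mul_of_nonneg_left hcost (sub_nonneg.2 hy.2)]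

lemma gam_lt_betaEff_static (ha : a ≤ 1) (hbP : 0 < bP) (hA1 : gam < a * bP) (hm : 0 ≤ m) :
    gam < betaEff a bP bU 1 0 m := by
  rw [betaEff_one_zero]
  nlinarith [mul_nonneg (mul_nonneg (sub_nonneg.2 ha) hm) hbP.le]

lemma isSNE_static_of_gFun_nonneg (ha : a ≤ 1) (hgam : 0 < gam) (hbP : 0 < bP)
    (hbPU : bP ≤ bU) (haL : 0 ≤ (1 - a) * L) (hA1 : gam < a * bP)
    (hA2 : (1 - a) * L * (bU - gam) < CP) (hm : m ∈ Icc 0 1)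
    (hg : 0 ≤ gFun a gam bP bU L CP CU 0 m) :
    IsSNE a gam bP bU L CP CU m (yEE a gam bP bU 1 0 m) 1 0 := by
  have hγ := gam_lt_betaEff_static (bU := bU) ha hbP hA1 hm.1
  have hy := yEE_mem_Ioo hgam hγ
  have hdUS := dUS_yEE_neg ha hbP.le hbPU haL hA2 hgam.le ⟨zero_le_one, le_rfl⟩
    ⟨le_rfl, zero_le_one⟩ hm (hgam.trans hγ)
  have hdUI : 0 ≤ dUI a bP bU L CP CU m (yEE a gam bP bU 1 0 m) 0 :=
    (dUI_nonneg_iff hy.1 hy.2.le hm.2).2 (gFun_eq_infectedGap ▸ hg)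
  exact ⟨hy, ⟨zero_le_one, le_rfl⟩, ⟨le_rfl, zero_le_one⟩, hγ, rfl,
    fun h => absurd hdUS h.not_gt, fun _ => rfl, fun _ => rfl, fun h => absurd hdUI h.not_ge⟩

namespace IsMuMax

variable {a gam bP bU L CP CU mmax : ℝ}

lemma mem_Icc (h : IsMuMax a gam bP bU L CP CU mmax) : mmax ∈ Icc 0 1 := by
  rcases h with ⟨-, rfl⟩ | ⟨-, hm, -⟩
  exacts [⟨le_rfl, zero_le_one⟩, Ioo_subset_Icc_self hm]

lemma gFun_nonneg (h : IsMuMax a gam bP bU L CP CU mmax) :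
    0 ≤ gFun a gam bP bU L CP CU 0 mmax := by
  rcases h with ⟨hg, rfl⟩ | ⟨-, -, hg⟩
  exacts [hg, hg.ge]

end IsMuMax

section Minimality

variable {a gam bP bU L CP CU zS zI m y mmax : ℝ}

lemma IsSNE.zS_eq_one (hSNE : IsSNE a gam bP bU L CP CU m y zS zI) (ha : a ≤ 1)
    (hgam : 0 ≤ gam) (hbP : 0 ≤ bP) (hbPU : bP ≤ bU) (haL : 0 ≤ (1 - a) * L)
    (hA2 : (1 - a) * L * (bU - gam) < CP) (hm : m ∈ Icc 0 1) : zS = 1 := by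
  obtain ⟨-, hzS, hzI, hγ, rfl, -, hzS_of_neg, -⟩ := hSNE
  exact hzS_of_neg <| dUS_yEE_neg ha hbP hbPU haL hA2 hgam hzS hzI hm (hγ.trans_le' hgam)

lemma IsSNE.exists_static_gFun_nonneg (hSNE : IsSNE a gam bP bU L CP CU m y 1 zI)
    (ha : a < 1) (hgam : 0 < gam) (hbP : 0 < bP) (hbPU : bP < bU) (haL : 0 ≤ (1 - a) * L)
    (hA2 : (1 - a) * L * (bU - gam) < CP) (hm : m ∈ Icc 0 1)
    (hc : betaEff a bP bU 1 zI m < bP) :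
    ∃ m' ≤ 1, betaEff a bP bU 1 0 m' = betaEff a bP bU 1 zI m ∧
      0 ≤ gFun a gam bP bU L CP CU 0 m' := by
  obtain ⟨⟨hy0, hy1⟩, -, hzI, hγ, rfl, -, -, -, hzI_of_neg⟩ := hSNE
  have hzI1 : zI < 1 := by
    refine hzI.2.lt_of_ne ?_
    rintro rfl
    have : betaEff a bP bU 1 1 m = bU := by unfold betaEff; ring
    linarith
  have hdUI : 0 ≤ infectedGap a L CP CU m (yEE a gam bP bU 1 zI m) (bP + (bU - bP) * zI) :=
    (dUI_nonneg_iff hy0 hy1.le hm.2).1 (not_lt.1 fun h => hzI1.ne (hzI_of_neg h))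
  obtain ⟨m', hrate⟩ : ∃ m', betaEff a bP bU 1 0 m' = betaEff a bP bU 1 zI m := by
    refine ⟨(betaEff a bP bU 1 zI m / bP - a) / (1 - a), ?_⟩
    have : 1 - a ≠ 0 := (sub_pos.2 ha).ne'
    rw [betaEff_one_zero]
    field_simp
    ring
  refine ⟨m', ?_, hrate, ?_⟩
  · by_contra! h
    have : bP ≤ betaEff a bP bU 1 0 m' := by
      rw [betaEff_one_zero]
      exact le_mul_of_one_le_right hbP.le (by nlinarith [sub_pos.2 ha])
    linarith
  have hB := transmission_mem_Icc hbPU.le hzI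
  have hloss := infectionLoss_lt_cost haL hA2 hgam.le (hgam.trans hγ)
    ((betaEff_le_transmission ha.le hbP.le hbPU.le ⟨zero_le_one, le_rfl⟩ hzI hm).trans hB.2)
    le_rfl
  have hyrate : yEE a gam bP bU 1 0 m' = yEE a gam bP bU 1 zI m := by unfold yEE; rw [hrate]
  rw [gFun_eq_infectedGap, hyrate, mul_zero, add_zero]
  exact hdUI.trans (infectedGap_le_static ha hbP hbPU haL ⟨hzI.1, hzI1⟩ ⟨hy0.le, hy1.le⟩
    hrate (hgam.trans hγ).le hc.le (by linarith))

lemma IsSNE.betaEff_static_le (hSNE : IsSNE a gam bP bU L CP CU m y zS zI)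
    (ha : a ∈ Ioo 0 1) (hgam : 0 < gam) (hbP : 0 < bP) (hbPU : bP < bU)
    (haL : 0 ≤ (1 - a) * L) (hCPU : CP < CU) (hA1 : gam < a * bP)
    (hA2 : (1 - a) * L * (bU - gam) < CP) (hm : m ∈ Icc 0 1)
    (hmmax : IsMuMax a gam bP bU L CP CU mmax) :
    betaEff a bP bU 1 0 mmax ≤ betaEff a bP bU zS zI m := by
  obtain rfl := hSNE.zS_eq_one ha.2.le hgam.le hbP.le hbPU.le haL hA2 hm
  have ⟨_, _, hzI, hγ, _⟩ := hSNE
  have hmax_le : betaEff a bP bU 1 0 mmax ≤ bP := by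
    rw [betaEff_one_zero]
    exact mul_le_of_le_one_right hbP.le (by
      nlinarith [mul_nonneg (sub_nonneg.2 ha.2.le) (sub_nonneg.2 hmmax.mem_Icc.2)])
  rcases le_or_gt bP (betaEff a bP bU 1 zI m) with hc | hc
  · exact hmax_le.trans hc
  rcases hmmax with ⟨-, rfl⟩ | ⟨-, hmmax, hg⟩
  · have hB := transmission_mem_Icc hbPU.le hzI
    calc betaEff a bP bU 1 0 0 = bP * a := by rw [betaEff_one_zero]; ring
      _ ≤ betaEff a bP bU 1 zI m :=
        mul_le_mul hB.1 (contact_mem_Icc ha.2.le ⟨zero_le_one, le_rfl⟩ hzI hm).1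
          ha.1.le (hbP.le.trans hB.1)
  obtain ⟨m', hm'1, hrate, hgap⟩ :=
    hSNE.exists_static_gFun_nonneg ha.2 hgam hbP hbPU haL hA2 hm hc
  have hle : mmax ≤ m' :=
    ((gFun_zero_strictMonoOn ha.2 hbP hbPU.le haL hgam hCPU hA2).le_iff_le
      ⟨hmmax.2.le, gam_lt_betaEff_static ha.2.le hbP hA1 hmmax.1.le⟩
      ⟨hm'1, hrate ▸ hγ⟩).1 (by rwa [hg])
  calc betaEff a bP bU 1 0 mmax ≤ betaEff a bP bU 1 0 m' := by
        simp only [betaEff_one_zero]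
        gcongr
        exact sub_nonneg.2 ha.2.le
    _ = betaEff a bP bU 1 zI m := hrate

end Minimality

theorem stmt18_general
    (a gam bP bU L CP CU : ℝ)
    (ha : a ∈ Set.Ioo (0:ℝ) 1) (hgam : gam ∈ Set.Ioo (0:ℝ) 1)
    (hbP : 0 < bP) (hbPU : bP < bU)
    (hL : 0 < L) (hCPU : CP < CU)
    (hA1 : gam < a * bP)
    (hA2 : (1 - a) * L * (bU - gam) < CP)
    (mmax : ℝ) (hmmax : IsMuMax a gam bP bU L CP CU mmax) :
    IsSNE a gam bP bU L CP CU mmax (yEE a gam bP bU 1 0 mmax) 1 0 ∧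
    ∀ m ∈ Set.Icc (0:ℝ) 1, ∀ y zS zI : ℝ,
      IsSNE a gam bP bU L CP CU m y zS zI →
        yEE a gam bP bU 1 0 mmax ≤ y := by
  have haL : 0 ≤ (1 - a) * L := mul_nonneg (sub_nonneg.2 ha.2.le) hL.le
  refine ⟨isSNE_static_of_gFun_nonneg ha.2.le hgam.1 hbP hbPU.le haL hA1 hA2 hmmax.mem_Icc
    hmmax.gFun_nonneg, fun m hm y zS zI hSNE => ?_⟩
  have hβ := hSNE.betaEff_static_le ha hgam.1 hbP hbPU haL hCPU hA1 hA2 hm hmmax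
  obtain ⟨-, -, -, -, rfl, -⟩ := hSNE
  exact yEE_le_yEE hgam.1.le
    (hgam.1.trans (gam_lt_betaEff_static ha.2.le hbP hA1 hmmax.mem_Icc.1)) hβ

theorem stmt18
    (a gam bP bU L CP CU : ℝ)
    (ha : a ∈ Set.Ioo (0:ℝ) 1) (hgam : gam ∈ Set.Ioo (0:ℝ) 1)
    (hbP : 0 < bP) (hbPU : bP < bU) (hbU1 : bU < 1)
    (hL : 0 < L) (hCP : 0 < CP) (hCPU : CP < CU)
    (hA1 : gam < a * bP)
    (hA2 : (1 - a) * L * (bU - gam) < CP)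
    (mmax : ℝ) (hmmax : IsMuMax a gam bP bU L CP CU mmax) :
    IsSNE a gam bP bU L CP CU mmax (yEE a gam bP bU 1 0 mmax) 1 0 ∧
    ∀ m ∈ Set.Icc (0:ℝ) 1, ∀ y zS zI : ℝ,
      IsSNE a gam bP bU L CP CU m y zS zI →
        yEE a gam bP bU 1 0 mmax ≤ y :=
  stmt18_general a gam bP bU L CP CU ha hgam hbP hbPU hL hCPU hA1 hA2 mmax hmmax
end Equilibria
end
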